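/- Let A = ⋃_{i∈ℤ} (a_i, b_i) ⊂ ℝ be a disjoint union of open intervals with b_i < a_{i+1}, such that all intervals have the same length (d(a_i, b_i) = d(a_{i+1}, b_{i+1}) for all i) and all gaps have the same length (d(b_i, a_{i+1}) = d(b_{i-1}, a_i) for all i). Then (A, d) with the Euclidean metric is plastic. -/

import Mathlib

def NonexpOn (φ : ℝ → ℝ) (A : Set ℝ) : Prop :=
  ∀ x ∈ A, ∀ y ∈ A, dist (φ x) (φ y) ≤ dist x y

def IsomOn (φ : ℝ → ℝ) (A : Set ℝ) : Prop :=
  ∀ x ∈ A, ∀ y ∈ A, dist (φ x) (φ y) = dist x y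

def Plastic (A : Set ℝ) : Prop :=
  ∀ φ : ℝ → ℝ, Set.BijOn φ A A → NonexpOn φ A → IsomOn φ A

/-!
A non-expansive bijection `φ` of `A` is continuous and injective on `A`, so by connectedness and
invariance of domain on `ℝ` it maps every component interval onto some component. A `1`-Lipschitz
map of an interval onto an interval of the same length is a translation or a reflection, so
centres go to centres and the induced map `σ : ℤ → ℤ` is injective and `1`-Lipschitz, hence
`i ↦ σ 0 ± i`. Comparing a point right of the centre of one interval with the centre of the next
shows that every piece is oriented like `σ`, so `φ` is a single map `x ↦ K ± x` on `A`.
-/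

open Set Metric Function

theorem isOpen_image_of_continuousOn_injOn {f : ℝ → ℝ} {s : Set ℝ} (hs : IsOpen s)
    (hf : ContinuousOn f s) (hinj : InjOn f s) : IsOpen (f '' s) := by
  rw [isOpen_iff_mem_nhds]
  rintro _ ⟨z, hz, rfl⟩
  obtain ⟨δ, hδ, hball⟩ := Metric.isOpen_iff.1 hs z hz
  have hIcc : Icc (z - δ / 2) (z + δ / 2) ⊆ s := by
    rw [← Real.closedBall_eq_Icc]
    exact (closedBall_subset_ball (half_lt_self hδ)).trans hball
  have hlt : z - δ / 2 < z + δ / 2 := by linarith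
  have hz' : z ∈ Ioo (z - δ / 2) (z + δ / 2) := ⟨by linarith, by linarith⟩
  have himage : f '' Ioo (z - δ / 2) (z + δ / 2) ⊆ f '' s :=
    image_mono (Ioo_subset_Icc_self.trans hIcc)
  rcases (hf.mono hIcc).strictMonoOn_of_injOn_Icc' hlt.le (hinj.mono hIcc) with hmono | hanti
  · rw [(hf.mono hIcc).image_Ioo_of_strictMonoOn hlt.le hmono] at himage
    exact Filter.mem_of_superset
      (Ioo_mem_nhds (hmono (left_mem_Icc.2 hlt.le) (Ioo_subset_Icc_self hz') hz'.1)
        (hmono (Ioo_subset_Icc_self hz') (right_mem_Icc.2 hlt.le) hz'.2)) himage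
  · rw [(hf.mono hIcc).image_Ioo_of_strictAntiOn hlt.le hanti] at himage
    exact Filter.mem_of_superset
      (Ioo_mem_nhds (hanti (Ioo_subset_Icc_self hz') (right_mem_Icc.2 hlt.le) hz'.2)
        (hanti (left_mem_Icc.2 hlt.le) (Ioo_subset_Icc_self hz') hz'.1)) himage

theorem IsPreconnected.subset_of_subset_iUnion {X ι : Type*} [TopologicalSpace X]
    {U : ι → Set X} {s : Set X} (hs : IsPreconnected s) (hU : ∀ i, IsOpen (U i))
    (hdisj : Pairwise (Disjoint on U)) (hsU : s ⊆ ⋃ i, U i) {j : ι} (hj : (s ∩ U j).Nonempty) :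
    s ⊆ U j := by
  refine hs.subset_left_of_subset_union (hU j)
    (isOpen_iUnion fun k => isOpen_iUnion fun _ => hU k)
    (disjoint_iUnion₂_right.2 fun k (hk : k ≠ j) => hdisj hk.symm)
    (hsU.trans (iSup_split_single U j).le) hj

theorem exists_bijOn_of_bijOn_iUnion {ι : Type*} {U : ι → Set ℝ} {φ : ℝ → ℝ}
    (hUo : ∀ i, IsOpen (U i)) (hUc : ∀ i, IsPreconnected (U i))
    (hdisj : Pairwise (Disjoint on U)) (hφ : BijOn φ (⋃ i, U i) (⋃ i, U i))
    (hcont : ContinuousOn φ (⋃ i, U i)) {i : ι} (hi : (U i).Nonempty) :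
    ∃ j, BijOn φ (U i) (U j) := by
  obtain ⟨z, hz⟩ := hi
  have hUi : U i ⊆ ⋃ k, U k := subset_iUnion U i
  obtain ⟨j, hj⟩ := mem_iUnion.1 (hφ.mapsTo (hUi hz))
  have hopen : ∀ s ⊆ ⋃ k, U k, IsOpen s → IsOpen (φ '' s) := fun s hs ho =>
    isOpen_image_of_continuousOn_injOn ho (hcont.mono hs) (hφ.injOn.mono hs)
  refine ⟨j, BijOn.mk ?_ (hφ.injOn.mono hUi) ?_⟩
  · refine image_subset_iff.1 (((hUc i).image φ (hcont.mono hUi)).subset_of_subset_iUnion hUo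
      hdisj ?_ ⟨φ z, mem_image_of_mem φ hz, hj⟩)
    exact image_subset_iff.2 (hφ.mapsTo.mono_left hUi)
  · set V := ⋃ k, ⋃ (_ : k ≠ i), U k
    have hsplit : ⋃ k, U k = U i ∪ V := iSup_split_single U i
    have hV : V ⊆ ⋃ k, U k := hsplit ▸ subset_union_right
    refine (hUc j).subset_left_of_subset_union (hopen _ hUi (hUo i))
      (hopen _ hV (isOpen_iUnion fun k => isOpen_iUnion fun _ => hUo k))
      (Disjoint.image (disjoint_iUnion₂_right.2 fun k (hk : k ≠ i) => hdisj hk.symm)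
        hφ.injOn hUi hV) ?_
      ⟨φ z, hj, mem_image_of_mem φ hz⟩
    rw [← image_union, ← hsplit, hφ.image_eq]
    exact subset_iUnion U j

theorem LipschitzOnWith.exists_abs_eq_one_of_ball_subset_image {f : ℝ → ℝ} {x y r : ℝ}
    (hf : LipschitzOnWith 1 f (ball x r)) (hsurj : ball y r ⊆ f '' ball x r) :
    ∃ ε : ℝ, |ε| = 1 ∧ ∀ z ∈ ball x r, f z = y + ε * (z - x) := by
  rcases le_or_gt r 0 with hr | hr
  · exact ⟨1, abs_one, fun z hz => absurd hz (by simp [ball_eq_empty.2 hr])⟩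
  obtain ⟨g, hg, hfg⟩ := hf.extend_real
  have hg_le : ∀ u v, |g u - g v| ≤ |u - v| := fun u v => by
    simpa [Real.dist_eq] using hg.dist_le_mul u v
  have hcover : closedBall y r ⊆ g '' closedBall x r := by
    rw [← closure_ball y hr.ne']
    refine closure_minimal ?_ ((isCompact_closedBall x r).image hg.continuous).isClosed
    calc ball y r ⊆ f '' ball x r := hsurj
      _ = g '' ball x r := hfg.image_eq
      _ ⊆ g '' closedBall x r := image_mono ball_subset_closedBall
  -- `g` attains `y ∓ r` at two points of `closedBall x r`; being `2 r` apart, they are its two ends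
  obtain ⟨u, hu, hgu⟩ := hcover (show y - r ∈ closedBall y r by
    rw [Real.closedBall_eq_Icc]; constructor <;> linarith)
  obtain ⟨v, hv, hgv⟩ := hcover (show y + r ∈ closedBall y r by
    rw [Real.closedBall_eq_Icc]; constructor <;> linarith)
  rw [Real.closedBall_eq_Icc] at hu hv
  obtain ⟨hu₁, hu₂⟩ := hu
  obtain ⟨hv₁, hv₂⟩ := hv
  have huv := hg_le v u
  rw [hgu, hgv, show y + r - (y - r) = 2 * r by ring, abs_of_pos (by linarith)] at huv
  have hbound : ∀ z, g z - (y - r) ≤ |z - u| ∧ y + r - g z ≤ |z - v| := fun z => by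
    constructor
    · simpa [hgu] using (le_abs_self _).trans (hg_le z u)
    · simpa [hgv, abs_sub_comm] using (le_abs_self _).trans (hg_le v z)
  rcases le_total u v with h | h
  · rw [abs_of_nonneg (by linarith)] at huv
    refine ⟨1, abs_one, fun z hz => ?_⟩
    obtain ⟨hzu, hzv⟩ := hbound z
    rw [Real.ball_eq_Ioo] at hz
    rw [abs_of_pos (by linarith [hz.1] : 0 < z - u)] at hzu
    rw [abs_of_neg (by linarith [hz.2] : z - v < 0)] at hzv
    rw [hfg (Real.ball_eq_Ioo x r ▸ hz)]
    linarith
  · rw [abs_of_nonpos (by linarith)] at huv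
    refine ⟨-1, by simp, fun z hz => ?_⟩
    obtain ⟨hzu, hzv⟩ := hbound z
    rw [Real.ball_eq_Ioo] at hz
    rw [abs_of_neg (by linarith [hz.2] : z - u < 0)] at hzu
    rw [abs_of_pos (by linarith [hz.1] : 0 < z - v)] at hzv
    rw [hfg (Real.ball_eq_Ioo x r ▸ hz)]
    linarith

theorem eq_add_zsmul_of_forall_sub_eq {G : Type*} [AddCommGroup G] {f : ℤ → G} {d : G}
    (h : ∀ i, f (i + 1) - f i = d) (i : ℤ) : f i = f 0 + i • d := by
  induction i using Int.induction_on with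
  | zero => simp
  | succ n ih => rw [← sub_add_cancel (f _) (f n), h, ih, add_zsmul, one_zsmul]; abel
  | pred n ih =>
    have hn := h (-n - 1)
    rw [sub_add_cancel] at hn
    rw [← sub_sub_cancel (f (-n)) (f _), hn, ih, sub_zsmul, one_zsmul]; abel

theorem Int.exists_eq_add_mul_of_injective_of_abs_sub_le_one {σ : ℤ → ℤ} (hinj : Injective σ)
    (hσ : ∀ i, |σ (i + 1) - σ i| ≤ 1) :
    ∃ s : ℤ, |s| = 1 ∧ ∀ i, σ i = σ 0 + i * s := by
  have hstep : ∀ i, σ (i + 1) - σ i = 1 ∨ σ (i + 1) - σ i = -1 := fun i => by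
    have hne : σ (i + 1) ≠ σ i := hinj.ne (by omega)
    have := abs_le.1 (hσ i)
    omega
  -- a change of direction would make `σ` take the same value twice
  have hconst : ∀ i, (σ (i + 1 + 1) - σ (i + 1)) - (σ (i + 1) - σ i) = 0 := fun i => by
    have hne : σ (i + 1 + 1) ≠ σ i := hinj.ne (by omega)
    rcases hstep i with h | h <;> rcases hstep (i + 1) with h' | h' <;> omega
  refine ⟨σ (0 + 1) - σ 0, ?_, fun i => ?_⟩
  · rcases hstep 0 with h | h <;> rw [h] <;> rfl
  · have := eq_add_zsmul_of_forall_sub_eq (fun i => by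
      simpa using eq_add_zsmul_of_forall_sub_eq (f := fun i => σ (i + 1) - σ i) hconst i) i
    simpa [mul_comm] using this

def periodicBalls (c p r : ℝ) : Set ℝ := ⋃ i : ℤ, ball (c + i * p) r

theorem NonexpOn.lipschitzOnWith {φ : ℝ → ℝ} {A : Set ℝ} (h : NonexpOn φ A) :
    LipschitzOnWith 1 φ A :=
  LipschitzOnWith.of_dist_le_mul fun x hx y hy => by simpa using h x hx y hy

theorem dist_add_int_mul_add_int_mul {c p : ℝ} (hp : 0 ≤ p) (i k : ℤ) :
    dist (c + i * p) (c + k * p) = ((|i - k| : ℤ) : ℝ) * p := by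
  rw [Real.dist_eq, show c + i * p - (c + k * p) = (i - k) * p by ring, abs_mul,
    abs_of_nonneg hp]
  push_cast
  rfl

section PeriodicBalls

variable {c p r : ℝ} {φ : ℝ → ℝ}

theorem ball_subset_periodicBalls (i : ℤ) : ball (c + i * p) r ⊆ periodicBalls c p r :=
  subset_iUnion (fun i : ℤ => ball (c + i * p) r) i

theorem pairwise_disjoint_ball_add_int_mul (hr : 0 < r) (hrp : 2 * r ≤ p) :
    Pairwise (Disjoint on fun i : ℤ => ball (c + i * p) r) := by
  intro i k hik
  apply ball_disjoint_ball
  rw [dist_add_int_mul_add_int_mul (by linarith)]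
  have : (1 : ℝ) ≤ |i - k| := by exact_mod_cast Int.one_le_abs (sub_ne_zero.2 hik)
  nlinarith

theorem exists_eq_on_ball_of_bijOn (hr : 0 < r) (hrp : 2 * r ≤ p)
    (hbij : BijOn φ (periodicBalls c p r) (periodicBalls c p r))
    (hφ : NonexpOn φ (periodicBalls c p r)) (i : ℤ) :
    ∃ j : ℤ, ∃ ε : ℝ, |ε| = 1 ∧
      ∀ z ∈ ball (c + i * p) r, φ z = c + j * p + ε * (z - (c + i * p)) := by
  obtain ⟨j, hj⟩ := exists_bijOn_of_bijOn_iUnion (fun _ => isOpen_ball)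
    (fun _ => (convex_ball _ _).isPreconnected) (pairwise_disjoint_ball_add_int_mul hr hrp) hbij
    hφ.lipschitzOnWith.continuousOn (nonempty_ball.2 hr)
  exact ⟨j, LipschitzOnWith.exists_abs_eq_one_of_ball_subset_image
    (hφ.lipschitzOnWith.mono (ball_subset_periodicBalls i)) hj.surjOn⟩

variable {σ : ℤ → ℤ} {ε : ℤ → ℝ}

theorem exists_eq_add_mul_of_eq_on_ball (hr : 0 < r) (hrp : 2 * r ≤ p)
    (hinj : InjOn φ (periodicBalls c p r)) (hφ : NonexpOn φ (periodicBalls c p r))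
    (hform : ∀ i : ℤ, ∀ z ∈ ball (c + i * p) r, φ z = c + σ i * p + ε i * (z - (c + i * p))) :
    ∃ s : ℤ, |s| = 1 ∧ ∀ i, σ i = σ 0 + i * s := by
  have hp : 0 < p := by linarith
  have hcentre : ∀ i : ℤ, φ (c + i * p) = c + σ i * p := fun i => by
    simpa using hform i _ (mem_ball_self hr)
  have hmem : ∀ i : ℤ, c + i * p ∈ periodicBalls c p r := fun i =>
    ball_subset_periodicBalls i (mem_ball_self hr)
  refine Int.exists_eq_add_mul_of_injective_of_abs_sub_le_one (fun i k hik => ?_) (fun i => ?_)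
  · have := hinj (hmem i) (hmem k) (by rw [hcentre, hcentre, hik])
    exact_mod_cast mul_right_cancel₀ hp.ne' (add_left_cancel this)
  · have := hφ _ (hmem (i + 1)) _ (hmem i)
    rw [hcentre, hcentre, dist_add_int_mul_add_int_mul hp.le,
      dist_add_int_mul_add_int_mul hp.le] at this
    simpa using Int.cast_le.1 (le_of_mul_le_mul_right this hp)

theorem orientation_eq_of_eq_on_ball (hr : 0 < r) (hrp : 2 * r ≤ p)
    (hφ : NonexpOn φ (periodicBalls c p r))
    (hform : ∀ i : ℤ, ∀ z ∈ ball (c + i * p) r, φ z = c + σ i * p + ε i * (z - (c + i * p)))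
    {s i : ℤ} (hs : |s| = 1) (hε : |ε i| = 1) (hσ : σ (i + 1) = σ i + s) : ε i = s := by
  have hz : c + i * p + r / 2 ∈ ball (c + i * p) r := by
    rw [mem_ball, Real.dist_eq, add_sub_cancel_left, abs_of_pos (by linarith)]
    linarith
  have hw : c + ((i + 1 : ℤ) : ℝ) * p ∈ ball (c + ((i + 1 : ℤ) : ℝ) * p) r := mem_ball_self hr
  have h := hφ _ (ball_subset_periodicBalls i hz) _ (ball_subset_periodicBalls (i + 1) hw)
  rw [hform i _ hz, hform (i + 1) _ hw, hσ, Real.dist_eq, Real.dist_eq] at h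
  have key : |ε i * (r / 2) - s * p| ≤ p - r / 2 := by
    convert h using 1
    · push_cast; ring_nf
    · push_cast
      rw [show c + i * p + r / 2 - (c + (i + 1) * p) = -(p - r / 2) by ring, abs_neg,
        abs_of_nonneg (by linarith)]
  have hs' : |(s : ℝ)| = 1 := by exact_mod_cast hs
  rcases (abs_eq zero_le_one).1 hε with h1 | h1 <;>
    rcases (abs_eq zero_le_one).1 hs' with h2 | h2 <;>
    rw [h1, h2] at key ⊢ <;> first | rfl | linarith [abs_le.1 key]

theorem plastic_periodicBalls (hr : 0 < r) (hrp : 2 * r ≤ p) : Plastic (periodicBalls c p r) := by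
  intro φ hbij hφ
  choose σ ε hε hform using exists_eq_on_ball_of_bijOn hr hrp hbij hφ
  obtain ⟨s, hs, hσ⟩ := exists_eq_add_mul_of_eq_on_ball hr hrp hbij.injOn hφ hform
  have hεs : ∀ i, ε i = s := fun i =>
    orientation_eq_of_eq_on_ball hr hrp hφ hform hs (hε i) (by rw [hσ, hσ i]; ring)
  have hglob : ∀ z ∈ periodicBalls c p r, φ z = c + σ 0 * p + s * (z - c) := by
    intro z hz
    obtain ⟨i, hi⟩ := mem_iUnion.1 hz
    rw [hform i z hi, hεs, hσ]
    push_cast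
    ring
  have hs' : |(s : ℝ)| = 1 := by exact_mod_cast hs
  intro x hx y hy
  rw [hglob x hx, hglob y hy, Real.dist_eq, Real.dist_eq,
    show c + σ 0 * p + s * (x - c) - (c + σ 0 * p + s * (y - c)) = s * (x - y) by ring,
    abs_mul, hs', one_mul]

end PeriodicBalls

theorem exists_Ioo_eq_ball_of_equal_lengths_and_gaps (a b : ℤ → ℝ)
    (hab : ∀ i : ℤ, a i < b i) (hba : ∀ i : ℤ, b i < a (i + 1))
    (hlen : ∀ i : ℤ, b i - a i = b (i + 1) - a (i + 1))
    (hgap : ∀ i : ℤ, a (i + 1) - b i = a i - b (i - 1)) :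
    ∃ c p r : ℝ, 0 < r ∧ 2 * r ≤ p ∧ ∀ i : ℤ, Ioo (a i) (b i) = ball (c + i * p) r := by
  have hL : ∀ i, b i - a i = b 0 - a 0 := fun i => by
    simpa using eq_add_zsmul_of_forall_sub_eq (f := fun i => b i - a i) (d := 0)
      (fun i => by linarith [hlen i]) i
  have hG : ∀ i, a (i + 1) - b i = a 1 - b 0 := fun i => by
    simpa using eq_add_zsmul_of_forall_sub_eq (f := fun i => a (i + 1) - b i) (d := 0)
      (fun i => by linarith [add_sub_cancel_right i 1 ▸ hgap (i + 1)]) i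
  have ha : ∀ i, a i = a 0 + i * (a 1 - a 0) := fun i => by
    simpa using eq_add_zsmul_of_forall_sub_eq (f := a) (d := a 1 - a 0)
      (fun i => by linarith [hL i, hG i, hL 0, hG 0]) i
  refine ⟨(a 0 + b 0) / 2, a 1 - a 0, (b 0 - a 0) / 2, by linarith [hab 0],
    by linarith [zero_add (1 : ℤ) ▸ hba 0], fun i => ?_⟩
  rw [Real.ball_eq_Ioo]
  congr 1 <;> linarith [ha i, hL i]

theorem equal_open_intervals_plastic (a b : ℤ → ℝ)
    (hab : ∀ i : ℤ, a i < b i) (hba : ∀ i : ℤ, b i < a (i + 1))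
    (hlen : ∀ i : ℤ, b i - a i = b (i + 1) - a (i + 1))
    (hgap : ∀ i : ℤ, a (i + 1) - b i = a i - b (i - 1)) :
    Plastic (⋃ i : ℤ, Set.Ioo (a i) (b i)) := by
  obtain ⟨c, p, r, hr, hrp, hball⟩ :=
    exists_Ioo_eq_ball_of_equal_lengths_and_gaps a b hab hba hlen hgap
  rw [iUnion_congr hball]
  exact plastic_periodicBalls hr hrp
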